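/- arXiv:2307.01297 — 3 statements merged into one kernel-verified Lean document; each statement's English description precedes it below -/
import Mathlib

section
/- If A and B are n×r real matrices each with full column rank r, then their Khatri-Rao product A ⊙ B (the n²×r matrix whose i-th column is the Kronecker product of the i-th columns of A and B) has full column rank r. -/
/-- Full column rank is equivalent to injectivity of the associated linear map. -/
lemma rank_iff_inj {m : Type*} [Fintype m] {r : ℕ} (A : Matrix m (Fin r) ℝ) :
    A.rank = r ↔ Function.Injective A.mulVecLin := by
  rw [← LinearMap.ker_eq_bot, Matrix.rank]
  constructor
  · intro h
    have := LinearMap.finrank_range_add_finrank_ker A.mulVecLin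
    rw [h] at this
    simp [Module.finrank_fin_fun] at this
    exact this
  · intro h
    have := LinearMap.finrank_range_add_finrank_ker A.mulVecLin
    rw [h] at this
    simpa [Module.finrank_fin_fun] using this

/-- The Khatri-Rao product of `A B : Matrix (Fin n) (Fin r) ℝ`: the `n² × r` matrix
(rows indexed by pairs) whose `i`-th column is the Kronecker product of the
`i`-th columns of `A` and `B`. -/
def khatriRao {n r : ℕ} (A B : Matrix (Fin n) (Fin r) ℝ) :
    Matrix (Fin n × Fin n) (Fin r) ℝ :=
  Matrix.of fun p i => A p.1 i * B p.2 i

/-- If `A` and `B` have full column rank `r`, so does their Khatri-Rao product. -/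
theorem khatriRao_rank {n r : ℕ} (A B : Matrix (Fin n) (Fin r) ℝ)
    (hA : A.rank = r) (hB : B.rank = r) : (khatriRao A B).rank = r := by
  rw [rank_iff_inj] at hA hB ⊢
  rw [injective_iff_map_eq_zero] at hA hB ⊢
  intro c hc
  have hc' : ∀ p q : Fin n, ∑ i, A p i * B q i * c i = 0 := by
    intro p q
    have := congrFun hc (p, q)
    simpa [khatriRao, Matrix.mulVecLin, Matrix.mulVec, dotProduct] using this
  have h1 : ∀ q i, B q i * c i = 0 := by
    intro q i
    have hz : A.mulVecLin (fun i => B q i * c i) = 0 := by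
      funext p
      simpa [Matrix.mulVecLin, Matrix.mulVec, dotProduct, mul_comm, mul_assoc,
        mul_left_comm] using hc' p q
    exact congrFun (hA _ hz) i
  funext i
  have hz : B.mulVecLin (Pi.single i (c i)) = 0 := by
    funext q
    simp [Matrix.mulVecLin, Matrix.mulVec_single, h1 q i]
  have := congrFun (hB _ hz) i
  simpa using this
end

section
/- Let A, B ∈ ℝ^{n×r} have full column rank and let D_u, D_v ∈ ℝ^{r×r} be diagonal with D_v invertible. Set T_u = A D_u Bᵀ and T_v = A D_v Bᵀ. Then T_u (T_v)⁺ = A D_u D_v^{-1} A⁺, where ⁺ denotes the Moore–Penrose pseudoinverse. -/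
open Matrix

/-- `P` is the Moore–Penrose pseudoinverse of `M` (the four Penrose conditions). -/
def IsMoorePenrose {m n : ℕ} (M : Matrix (Fin m) (Fin n) ℝ)
    (P : Matrix (Fin n) (Fin m) ℝ) : Prop :=
  M * P * M = M ∧ P * M * P = P ∧ (M * P)ᵀ = M * P ∧ (P * M)ᵀ = P * M

/-- Uniqueness of the Moore–Penrose pseudoinverse. -/
lemma mp_unique {m n : ℕ} {M : Matrix (Fin m) (Fin n) ℝ}
    {P Q : Matrix (Fin n) (Fin m) ℝ}
    (hP : IsMoorePenrose M P) (hQ : IsMoorePenrose M Q) : P = Q := by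
  obtain ⟨hP1, hP2, hP3, hP4⟩ := hP
  obtain ⟨hQ1, hQ2, hQ3, hQ4⟩ := hQ
  have hMt : Mᵀ = Mᵀ * (M * Q) := by
    conv_lhs => rw [← hQ1]
    rw [transpose_mul, hQ3]
  have hMt2 : Mᵀ = (Q * M) * Mᵀ := by
    conv_lhs => rw [← hQ1, Matrix.mul_assoc]
    rw [transpose_mul, hQ4]
  have hMP : M * P = M * Q := by
    calc M * P = (M * P)ᵀ := hP3.symm
    _ = Pᵀ * Mᵀ := by rw [transpose_mul]
    _ = Pᵀ * (Mᵀ * (M * Q)) := by rw [← hMt]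
    _ = (Pᵀ * Mᵀ) * (M * Q) := by rw [Matrix.mul_assoc]
    _ = (M * P)ᵀ * (M * Q) := by rw [transpose_mul]
    _ = M * P * (M * Q) := by rw [hP3]
    _ = (M * P * M) * Q := by simp only [Matrix.mul_assoc]
    _ = M * Q := by rw [hP1]
  have hPM : P * M = Q * M := by
    calc P * M = (P * M)ᵀ := hP4.symm
    _ = Mᵀ * Pᵀ := by rw [transpose_mul]
    _ = ((Q * M) * Mᵀ) * Pᵀ := by rw [← hMt2]
    _ = (Q * M) * (Mᵀ * Pᵀ) := by rw [Matrix.mul_assoc]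
    _ = (Q * M) * (P * M)ᵀ := by rw [transpose_mul]
    _ = (Q * M) * (P * M) := by rw [hP4]
    _ = Q * ((M * P) * M) := by simp only [Matrix.mul_assoc]
    _ = Q * M := by rw [hP1]
  calc P = P * M * P := hP2.symm
  _ = (Q * M) * P := by rw [hPM]
  _ = Q * (M * P) := by rw [Matrix.mul_assoc]
  _ = Q * (M * Q) := by rw [hMP]
  _ = (Q * M) * Q := by rw [Matrix.mul_assoc]
  _ = Q := by rw [hQ2]

/-- A square matrix of full rank has a unit determinant. -/
lemma det_isUnit_of_rank {r : ℕ} (M : Matrix (Fin r) (Fin r) ℝ)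
    (h : M.rank = r) : IsUnit M.det := by
  have hker : LinearMap.ker M.mulVecLin = ⊥ := by
    have := LinearMap.finrank_range_add_finrank_ker M.mulVecLin
    rw [show Module.finrank ℝ (LinearMap.range M.mulVecLin) = r from h,
      Module.finrank_fin_fun] at this
    exact Submodule.finrank_eq_zero.1 (by omega)
  have hinj : Function.Injective M.mulVec := by
    have := LinearMap.ker_eq_bot.1 hker
    exact this
  exact (Matrix.isUnit_iff_isUnit_det M).1 (mulVec_injective_iff_isUnit.1 hinj)

/-- A full-column-rank matrix gives an injective `mulVec`. -/
lemma mulVec_injective_of_rank {n r : ℕ} (M : Matrix (Fin n) (Fin r) ℝ)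
    (h : M.rank = r) : Function.Injective M.mulVec := by
  have hker : LinearMap.ker M.mulVecLin = ⊥ := by
    have := LinearMap.finrank_range_add_finrank_ker M.mulVecLin
    rw [show Module.finrank ℝ (LinearMap.range M.mulVecLin) = r from h,
      Module.finrank_fin_fun] at this
    exact Submodule.finrank_eq_zero.1 (by omega)
  have := LinearMap.ker_eq_bot.1 hker
  exact this

lemma mul_left_cancel_of_rank {n r m : ℕ} (M : Matrix (Fin n) (Fin r) ℝ)
    (h : M.rank = r) {X Y : Matrix (Fin r) (Fin m) ℝ}
    (hXY : M * X = M * Y) : X = Y := by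
  have hinj := mulVec_injective_of_rank M h
  ext i j
  have : M.mulVec (fun k => X k j) = M.mulVec (fun k => Y k j) := by
    funext a
    have := congrFun (congrFun hXY a) j
    simpa [Matrix.mul_apply, Matrix.mulVec, dotProduct] using this
  exact congrFun (hinj this) i

/-- For full-column-rank `A, B` and diagonal `D_u, D_v` with `D_v` invertible,
`(A D_u Bᵀ)(A D_v Bᵀ)⁺ = A D_u D_v⁻¹ A⁺`. -/
theorem jennrich_product {n r : ℕ} (hrn : r ≤ n)
    (A B : Matrix (Fin n) (Fin r) ℝ) (hA : A.rank = r) (hB : B.rank = r)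
    (Du Dv : Matrix (Fin r) (Fin r) ℝ) (hDu : Du.IsDiag) (hDv : Dv.IsDiag)
    (hDvu : IsUnit Dv.det)
    (Pv : Matrix (Fin n) (Fin n) ℝ) (hPv : IsMoorePenrose (A * Dv * Bᵀ) Pv)
    (PA : Matrix (Fin r) (Fin n) ℝ) (hPA : IsMoorePenrose A PA) :
    (A * Du * Bᵀ) * Pv = A * Du * Dv⁻¹ * PA := by
  obtain ⟨hA1, hA2, hA3, hA4⟩ := hPA
  -- PA is a left inverse of A
  have hPAA : PA * A = 1 := by
    apply mul_left_cancel_of_rank A hA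
    rw [← Matrix.mul_assoc, hA1, Matrix.mul_one]
  -- BᵀB is invertible
  have hBB : IsUnit (Bᵀ * B).det := by
    apply det_isUnit_of_rank
    rw [Matrix.rank_transpose_mul_self, hB]
  have hBB1 : (Bᵀ * B) * (Bᵀ * B)⁻¹ = 1 := Matrix.mul_nonsing_inv _ hBB
  have hDv1 : Dv * Dv⁻¹ = 1 := Matrix.mul_nonsing_inv _ hDvu
  have hDv2 : Dv⁻¹ * Dv = 1 := Matrix.nonsing_inv_mul _ hDvu
  -- helper rewrite rules, in right-associated form
  have hPAA' : ∀ (m : ℕ) (X : Matrix (Fin r) (Fin m) ℝ), PA * (A * X) = X := by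
    intro m X; rw [← Matrix.mul_assoc, hPAA, Matrix.one_mul]
  have hkey : ∀ (m : ℕ) (X : Matrix (Fin r) (Fin m) ℝ),
      Bᵀ * (B * ((Bᵀ * B)⁻¹ * X)) = X := by
    intro m X
    calc Bᵀ * (B * ((Bᵀ * B)⁻¹ * X)) = (Bᵀ * B) * (Bᵀ * B)⁻¹ * X := by
          simp only [Matrix.mul_assoc]
    _ = X := by rw [hBB1, Matrix.one_mul]
  have hDv1' : ∀ (m : ℕ) (X : Matrix (Fin r) (Fin m) ℝ),
      Dv * (Dv⁻¹ * X) = X := by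
    intro m X; rw [← Matrix.mul_assoc, hDv1, Matrix.one_mul]
  have hDv2' : ∀ (m : ℕ) (X : Matrix (Fin r) (Fin m) ℝ),
      Dv⁻¹ * (Dv * X) = X := by
    intro m X; rw [← Matrix.mul_assoc, hDv2, Matrix.one_mul]
  have hsymm : ((Bᵀ * B)⁻¹)ᵀ = (Bᵀ * B)⁻¹ := by
    rw [Matrix.transpose_nonsing_inv, transpose_mul, transpose_transpose]
  -- the explicit candidate pseudoinverse
  set Q : Matrix (Fin n) (Fin n) ℝ := B * ((Bᵀ * B)⁻¹ * (Dv⁻¹ * PA)) with hQdef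
  have h3 : (A * Dv * Bᵀ) * Q = A * PA := by
    rw [hQdef]
    simp only [Matrix.mul_assoc, hkey, hDv1']
  have h4 : Q * (A * Dv * Bᵀ) = B * ((Bᵀ * B)⁻¹ * Bᵀ) := by
    rw [hQdef]
    simp only [Matrix.mul_assoc, hPAA', hDv2']
  have hQ : IsMoorePenrose (A * Dv * Bᵀ) Q := by
    refine ⟨?_, ?_, ?_, ?_⟩
    · rw [h3]
      simp only [Matrix.mul_assoc, hPAA']
    · rw [Matrix.mul_assoc, h3, hQdef]
      simp only [Matrix.mul_assoc, hPAA', hDv1']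
    · rw [h3, hA3]
    · rw [h4, transpose_mul, transpose_mul, hsymm, transpose_transpose,
        Matrix.mul_assoc]
  have hPvQ : Pv = Q := mp_unique hPv hQ
  rw [hPvQ, hQdef]
  simp only [Matrix.mul_assoc, hkey]
end

section
/- Let u, v ∈ ℝ^s with ⟨c_i, v⟩ ≠ 0 for all i, where c_1,…,c_r ∈ ℝ^s, and let A, B ∈ ℝ^{n×r} have full column rank. Define T_u = Σ_i ⟨c_i,u⟩ a_i b_iᵀ and T_v = Σ_i ⟨c_i,v⟩ a_i b_iᵀ. If the ratios λ_i = ⟨c_i,u⟩/⟨c_i,v⟩ are pairwise distinct, then T_u (T_v)⁺ is diagonalizable with nonzero eigenvalues exactly {λ_i : ⟨c_i,u⟩ ≠ 0}, and a_i is an eigenvector with eigenvalue λ_i for each i. -/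
open Matrix

private lemma mulVec_sum_smul_vecMulVec {n r : ℕ} (γ : Fin r → ℝ) (a b : Fin r → Fin n → ℝ)
    (x : Fin n → ℝ) :
    (∑ i, γ i • vecMulVec (a i) (b i)) *ᵥ x = ∑ i, (γ i * (b i ⬝ᵥ x)) • a i := by
  ext j
  simp only [mulVec, dotProduct, Finset.sum_apply, Matrix.sum_apply, Matrix.smul_apply,
    vecMulVec_apply, Pi.smul_apply, smul_eq_mul, Finset.sum_mul, Finset.mul_sum]
  rw [Finset.sum_comm]
  exact Finset.sum_congr rfl fun i _ => Finset.sum_congr rfl fun k _ => by ring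

private lemma vecMulVec_mul' {n m : ℕ} (w : Fin n → ℝ) (v : Fin m → ℝ)
    (N : Matrix (Fin m) (Fin m) ℝ) :
    vecMulVec w v * N = vecMulVec w (Nᵀ *ᵥ v) := by
  ext i j
  simp only [Matrix.mul_apply, vecMulVec_apply, mulVec, dotProduct, transpose_apply,
    Finset.mul_sum]
  exact Finset.sum_congr rfl fun k _ => by ring

private lemma dotProduct_sum_smul {n r : ℕ} (v : Fin n → ℝ) (t : Fin r → ℝ)
    (f : Fin r → Fin n → ℝ) :
    v ⬝ᵥ (∑ i, t i • f i) = ∑ i, t i * (v ⬝ᵥ f i) := by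
  simp only [dotProduct, Finset.sum_apply, Pi.smul_apply, smul_eq_mul, Finset.mul_sum]
  rw [Finset.sum_comm]
  exact Finset.sum_congr rfl fun i _ => Finset.sum_congr rfl fun k _ => by ring

private lemma exists_dual_family {n r : ℕ} {a : Fin r → Fin n → ℝ}
    (ha : LinearIndependent ℝ a) :
    ∃ y : Fin r → Fin n → ℝ, ∀ i j, a i ⬝ᵥ y j = if i = j then 1 else 0 := by
  classical
  set G : Matrix (Fin r) (Fin r) ℝ := Matrix.of (fun i j => a i ⬝ᵥ a j) with hG
  have hker : ∀ t, G *ᵥ t = 0 → t = 0 := by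
    intro t ht
    set w : Fin n → ℝ := ∑ i, t i • a i with hw
    have haw : ∀ i, a i ⬝ᵥ w = (G *ᵥ t) i := by
      intro i
      rw [hw, dotProduct_sum_smul]
      simp only [mulVec, dotProduct, hG, Matrix.of_apply]
      exact Finset.sum_congr rfl fun k _ => by ring
    have hww : w ⬝ᵥ w = 0 := by
      have h1 : w ⬝ᵥ w = ∑ i, t i * (a i ⬝ᵥ w) := by
        simp only [dotProduct]
        have hwp : ∀ p, w p = ∑ i, t i * a i p := by
          intro p; simp [hw]
        calc ∑ p, w p * w p = ∑ p, ∑ i, t i * a i p * w p := by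
              refine Finset.sum_congr rfl fun p _ => ?_
              rw [hwp p, Finset.sum_mul]
          _ = ∑ i, ∑ p, t i * a i p * w p := Finset.sum_comm
          _ = ∑ i, t i * ∑ p, a i p * w p := by
              refine Finset.sum_congr rfl fun i _ => ?_
              rw [Finset.mul_sum]
              exact Finset.sum_congr rfl fun p _ => by ring
      rw [h1]
      simp [haw, ht]
    have hw0 : w = 0 := dotProduct_self_eq_zero.mp hww
    funext i
    exact Fintype.linearIndependent_iff.mp ha t (by rw [← hw]; exact hw0) i
  have hinj : Function.Injective G.mulVec := by
    intro t t' h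
    have : G *ᵥ (t - t') = 0 := by rw [mulVec_sub, h, sub_self]
    have := hker _ this
    exact sub_eq_zero.mp this
  have hU : IsUnit G := mulVec_injective_iff_isUnit.mp hinj
  have hGdet : IsUnit G.det := (isUnit_iff_isUnit_det G).mp hU
  have hGinv : G * G⁻¹ = 1 := mul_nonsing_inv G hGdet
  refine ⟨fun j => ∑ k, G⁻¹ k j • a k, fun i j => ?_⟩
  have h2 : a i ⬝ᵥ (∑ k, G⁻¹ k j • a k) = ∑ k, G i k * G⁻¹ k j := by
    rw [dotProduct_sum_smul]
    exact Finset.sum_congr rfl fun k _ => by rw [hG]; simp [Matrix.of_apply]; ring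
  rw [h2, ← Matrix.mul_apply, hGinv, Matrix.one_apply]

/-- Jennrich: with `T_u = Σᵢ ⟨cᵢ,u⟩ aᵢbᵢᵀ`, `T_v = Σᵢ ⟨cᵢ,v⟩ aᵢbᵢᵀ`, full column
rank factors, `⟨cᵢ,v⟩ ≠ 0`, and pairwise distinct ratios `λᵢ = ⟨cᵢ,u⟩/⟨cᵢ,v⟩`,
the matrix `T_u (T_v)⁺` is diagonalizable, each `aᵢ` is an eigenvector with
eigenvalue `λᵢ`, and its nonzero eigenvalues are exactly `{λᵢ : ⟨cᵢ,u⟩ ≠ 0}`. -/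
theorem jennrich_diagonalization {n r s : ℕ} (hrn : r ≤ n)
    (a b : Fin r → Fin n → ℝ)
    (ha : LinearIndependent ℝ a) (hb : LinearIndependent ℝ b)
    (c : Fin r → Fin s → ℝ) (u v : Fin s → ℝ)
    (hv : ∀ i, c i ⬝ᵥ v ≠ 0)
    (hdistinct : ∀ i j, i ≠ j → (c i ⬝ᵥ u) / (c i ⬝ᵥ v) ≠ (c j ⬝ᵥ u) / (c j ⬝ᵥ v))
    (Pv : Matrix (Fin n) (Fin n) ℝ)
    (hPv : IsMoorePenrose (∑ i, (c i ⬝ᵥ v) • vecMulVec (a i) (b i)) Pv) :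
    (∀ i, ((∑ i, (c i ⬝ᵥ u) • vecMulVec (a i) (b i)) * Pv).mulVec (a i) =
        ((c i ⬝ᵥ u) / (c i ⬝ᵥ v)) • a i) ∧
    (∀ μ : ℝ, μ ≠ 0 →
      ((∃ x : Fin n → ℝ, x ≠ 0 ∧
          ((∑ i, (c i ⬝ᵥ u) • vecMulVec (a i) (b i)) * Pv).mulVec x = μ • x) ↔
        (∃ i, c i ⬝ᵥ u ≠ 0 ∧ μ = (c i ⬝ᵥ u) / (c i ⬝ᵥ v)))) ∧
    (∃ (S Δ : Matrix (Fin n) (Fin n) ℝ), IsUnit S.det ∧ Δ.IsDiag ∧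
      (∑ i, (c i ⬝ᵥ u) • vecMulVec (a i) (b i)) * Pv = S * Δ * S⁻¹) := by
  classical
  obtain ⟨y, hy⟩ := exists_dual_family ha
  obtain ⟨z, hz⟩ := exists_dual_family hb
  set Tu : Matrix (Fin n) (Fin n) ℝ := ∑ i, (c i ⬝ᵥ u) • vecMulVec (a i) (b i) with hTu
  set Tv : Matrix (Fin n) (Fin n) ℝ := ∑ i, (c i ⬝ᵥ v) • vecMulVec (a i) (b i) with hTv
  obtain ⟨pen1, pen2, sym1, sym2⟩ := hPv
  -- Tv hits each a j
  have hTv_hits_a : ∀ j, Tv *ᵥ ((c j ⬝ᵥ v)⁻¹ • z j) = a j := by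
    intro j
    rw [hTv, mulVec_sum_smul_vecMulVec]
    have hterm : ∀ i, (c i ⬝ᵥ v) * (b i ⬝ᵥ ((c j ⬝ᵥ v)⁻¹ • z j)) = if i = j then 1 else 0 := by
      intro i
      rw [dotProduct_smul, hz, smul_eq_mul]
      by_cases h : i = j
      · simp [h, mul_inv_cancel₀ (hv j)]
      · simp [h]
    simp only [hterm, ite_smul, one_smul, zero_smul]
    simp
  -- Tvᵀ as a sum
  have hTvT : Tvᵀ = ∑ i, (c i ⬝ᵥ v) • vecMulVec (b i) (a i) := by
    ext i j
    simp [hTv, transpose_apply, Matrix.sum_apply, vecMulVec_apply, mul_comm]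
  -- Tvᵀ hits each b j
  have hTvT_hits_b : ∀ j, Tvᵀ *ᵥ ((c j ⬝ᵥ v)⁻¹ • y j) = b j := by
    intro j
    rw [hTvT, mulVec_sum_smul_vecMulVec]
    have hterm : ∀ i, (c i ⬝ᵥ v) * (a i ⬝ᵥ ((c j ⬝ᵥ v)⁻¹ • y j)) = if i = j then 1 else 0 := by
      intro i
      rw [dotProduct_smul, hy, smul_eq_mul]
      by_cases h : i = j
      · simp [h, mul_inv_cancel₀ (hv j)]
      · simp [h]
    simp only [hterm, ite_smul, one_smul, zero_smul]
    simp
  -- (Pv * Tv) * Tvᵀ = Tvᵀ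
  have hQ : (Pv * Tv) * Tvᵀ = Tvᵀ := by
    calc (Pv * Tv) * Tvᵀ = (Pv * Tv)ᵀ * Tvᵀ := by rw [sym2]
      _ = (Tv * (Pv * Tv))ᵀ := by rw [← transpose_mul]
      _ = Tvᵀ := by rw [← Matrix.mul_assoc, pen1]
  have hQb : ∀ j, (Pv * Tv) *ᵥ b j = b j := by
    intro j
    rw [← hTvT_hits_b j, mulVec_mulVec, hQ]
  -- Tu * (Pv * Tv) = Tu
  have hTuQ : Tu * (Pv * Tv) = Tu := by
    conv_lhs => rw [hTu]
    conv_rhs => rw [hTu]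
    rw [Finset.sum_mul]
    refine Finset.sum_congr rfl fun i _ => ?_
    rw [Matrix.smul_mul, vecMulVec_mul', sym2, hQb i]
  have hTuPT : Tu * Pv * Tv = Tu := by rw [Matrix.mul_assoc]; exact hTuQ
  -- part 1
  have part1 : ∀ j, (Tu * Pv) *ᵥ a j = ((c j ⬝ᵥ u) / (c j ⬝ᵥ v)) • a j := by
    intro j
    conv_lhs => rw [← hTv_hits_a j]
    rw [mulVec_mulVec, hTuPT, hTu, mulVec_sum_smul_vecMulVec]
    have hterm : ∀ i, (c i ⬝ᵥ u) * (b i ⬝ᵥ ((c j ⬝ᵥ v)⁻¹ • z j)) =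
        if i = j then (c j ⬝ᵥ u) / (c j ⬝ᵥ v) else 0 := by
      intro i
      rw [dotProduct_smul, hz, smul_eq_mul]
      by_cases h : i = j
      · simp [h, div_eq_mul_inv, mul_comm]
      · simp [h]
    simp only [hterm, ite_smul, zero_smul]
    simp
  -- part 2
  have part2 : ∀ μ : ℝ, μ ≠ 0 →
      ((∃ x : Fin n → ℝ, x ≠ 0 ∧ (Tu * Pv) *ᵥ x = μ • x) ↔
        (∃ i, c i ⬝ᵥ u ≠ 0 ∧ μ = (c i ⬝ᵥ u) / (c i ⬝ᵥ v))) := by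
    intro μ hμ
    constructor
    · rintro ⟨x, hx0, hx⟩
      set t : Fin r → ℝ := fun i => μ⁻¹ * ((c i ⬝ᵥ u) * (b i ⬝ᵥ (Pv *ᵥ x))) with htdef
      have hMx : (Tu * Pv) *ᵥ x = ∑ i, ((c i ⬝ᵥ u) * (b i ⬝ᵥ (Pv *ᵥ x))) • a i := by
        rw [← mulVec_mulVec, hTu, mulVec_sum_smul_vecMulVec]
      have hxeq : x = ∑ i, t i • a i := by
        have h1 : μ • x = ∑ i, ((c i ⬝ᵥ u) * (b i ⬝ᵥ (Pv *ᵥ x))) • a i := by rw [← hx, hMx]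
        calc x = μ⁻¹ • (μ • x) := by rw [smul_smul, inv_mul_cancel₀ hμ, one_smul]
          _ = ∑ i, t i • a i := by
              rw [h1, Finset.smul_sum]
              exact Finset.sum_congr rfl fun i _ => by rw [htdef, smul_smul]
      have hMx2 : (Tu * Pv) *ᵥ x = ∑ i, (t i * ((c i ⬝ᵥ u) / (c i ⬝ᵥ v))) • a i := by
        conv_lhs => rw [hxeq]
        have hsum : (Tu * Pv) *ᵥ (∑ i, t i • a i) = ∑ i, t i • ((Tu * Pv) *ᵥ a i) := by
          rw [← mulVecLin_apply, map_sum]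
          exact Finset.sum_congr rfl fun i _ => by rw [LinearMap.map_smul, mulVecLin_apply]
        rw [hsum]
        exact Finset.sum_congr rfl fun i _ => by rw [part1 i, smul_smul]
      have hcoef : ∀ i, t i * ((c i ⬝ᵥ u) / (c i ⬝ᵥ v)) = μ * t i := by
        have h2 : ∑ i, (t i * ((c i ⬝ᵥ u) / (c i ⬝ᵥ v)) - μ * t i) • a i = 0 := by
          simp only [sub_smul, Finset.sum_sub_distrib]
          rw [← hMx2, hx, hxeq, Finset.smul_sum]
          rw [sub_eq_zero]
          exact Finset.sum_congr rfl fun i _ => by rw [smul_smul]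
        intro i
        have h3 := Fintype.linearIndependent_iff.mp ha _ h2 i
        linarith [h3]
      have hex : ∃ i, t i ≠ 0 := by
        by_contra h
        push_neg at h
        apply hx0
        rw [hxeq]
        simp [h]
      obtain ⟨i, hti⟩ := hex
      have hlam : (c i ⬝ᵥ u) / (c i ⬝ᵥ v) = μ :=
        mul_left_cancel₀ hti ((hcoef i).trans (mul_comm μ (t i)))
      refine ⟨i, ?_, hlam.symm⟩
      intro h0
      rw [h0, zero_div] at hlam
      exact hμ hlam.symm
    · rintro ⟨i, hαi, hμi⟩
      exact ⟨a i, ha.ne_zero i, by rw [part1 i, hμi]⟩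
  -- part 3
  have hEa : ∀ j, (Tv * Pv) *ᵥ a j = a j := by
    intro j
    conv_lhs => rw [← hTv_hits_a j]
    rw [mulVec_mulVec, pen1]
    exact hTv_hits_a j
  have hME : (Tu * Pv) * (Tv * Pv) = Tu * Pv := by
    rw [← Matrix.mul_assoc, hTuPT]
  set p : Submodule ℝ (Fin n → ℝ) := Submodule.span ℝ (Set.range a) with hp
  have hproj : LinearMap.IsProj p (Tv * Pv).mulVecLin := by
    refine ⟨fun x => ?_, fun x hx => ?_⟩
    · rw [mulVecLin_apply, ← mulVec_mulVec, hTv, mulVec_sum_smul_vecMulVec]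
      exact Submodule.sum_mem _ fun i _ =>
        Submodule.smul_mem _ _ (Submodule.subset_span ⟨i, rfl⟩)
    · refine LinearMap.eqOn_span (f := (Tv * Pv).mulVecLin) (g := LinearMap.id) ?_ hx
      rintro x' ⟨i, rfl⟩
      simp only [mulVecLin_apply, LinearMap.id_apply]
      exact hEa i
  have hcompl : IsCompl p (LinearMap.ker (Tv * Pv).mulVecLin) := hproj.isCompl
  set K : Submodule ℝ (Fin n → ℝ) := LinearMap.ker (Tv * Pv).mulVecLin with hK
  let bspan : Module.Basis (Fin r) ℝ p := Module.Basis.span ha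
  let κ : Module.Basis (Fin (Module.finrank ℝ K)) ℝ K := Module.finBasis ℝ K
  let Bfull : Module.Basis (Fin r ⊕ Fin (Module.finrank ℝ K)) ℝ (Fin n → ℝ) :=
    (bspan.prod κ).map (Submodule.prodEquivOfIsCompl p K hcompl)
  have hcard : Fintype.card (Fin r ⊕ Fin (Module.finrank ℝ K)) = n := by
    have h1 := Module.finrank_eq_card_basis Bfull
    rw [Module.finrank_fin_fun] at h1
    exact h1.symm
  let σ : (Fin r ⊕ Fin (Module.finrank ℝ K)) ≃ Fin n := Fintype.equivFinOfCardEq hcard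
  have hBinl : ∀ i, Bfull (Sum.inl i) = a i := by
    intro i
    show (Submodule.prodEquivOfIsCompl p K hcompl) ((bspan.prod κ) (Sum.inl i)) = a i
    rw [Submodule.coe_prodEquivOfIsCompl']
    rw [Module.Basis.prod_apply_inl_fst, Module.Basis.prod_apply_inl_snd]
    simp only [bspan, Submodule.coe_zero, add_zero]
    exact congrArg Subtype.val (Module.Basis.span_apply ha i)
  have hBinr : ∀ j, (Tv * Pv) *ᵥ (Bfull (Sum.inr j)) = 0 := by
    intro j
    have hmem : Bfull (Sum.inr j) ∈ K := by
      show (Submodule.prodEquivOfIsCompl p K hcompl) ((bspan.prod κ) (Sum.inr j)) ∈ K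
      rw [Submodule.coe_prodEquivOfIsCompl']
      rw [Module.Basis.prod_apply_inr_fst, Module.Basis.prod_apply_inr_snd]
      simp only [Submodule.coe_zero, zero_add]
      exact (κ j).2
    have := LinearMap.mem_ker.mp hmem
    rwa [mulVecLin_apply] at this
  have heig : ∀ q : Fin n, (Tu * Pv) *ᵥ (Bfull (σ.symm q)) =
      (Sum.elim (fun i => (c i ⬝ᵥ u) / (c i ⬝ᵥ v)) (fun _ => (0 : ℝ)) (σ.symm q)) •
        Bfull (σ.symm q) := by
    intro q
    rcases σ.symm q with i | j
    · rw [Sum.elim_inl, hBinl i]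
      exact part1 i
    · rw [Sum.elim_inr, zero_smul, ← hME, ← mulVec_mulVec, hBinr j, mulVec_zero]
  let Breind : Module.Basis (Fin n) ℝ (Fin n → ℝ) := Bfull.reindex σ
  have hBapp : ∀ q, Breind q = Bfull (σ.symm q) := fun q => Bfull.reindex_apply σ q
  set S : Matrix (Fin n) (Fin n) ℝ := (Pi.basisFun ℝ (Fin n)).toMatrix ⇑Breind with hS
  have hSinv : Invertible S := (Pi.basisFun ℝ (Fin n)).invertibleToMatrix Breind
  have hSdet : IsUnit S.det := (isUnit_iff_isUnit_det S).mp (isUnit_of_invertible S)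
  have hScol : ∀ i q, S i q = Bfull (σ.symm q) i := by
    intro i q
    rw [hS, Module.Basis.toMatrix_apply, Pi.basisFun_repr, hBapp]
  set d : Fin n → ℝ :=
    fun q => Sum.elim (fun i => (c i ⬝ᵥ u) / (c i ⬝ᵥ v)) (fun _ => (0 : ℝ)) (σ.symm q) with hd
  have hMS : (Tu * Pv) * S = S * Matrix.diagonal d := by
    ext i q
    rw [Matrix.mul_apply, Matrix.mul_diagonal]
    have h1 := congrFun (heig q) i
    simp only [Pi.smul_apply, smul_eq_mul] at h1
    have h2 : ((Tu * Pv) *ᵥ (Bfull (σ.symm q))) i = ∑ k, (Tu * Pv) i k * S k q := by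
      simp only [mulVec, dotProduct]
      exact Finset.sum_congr rfl fun k _ => by rw [hScol k q]
    rw [← h2, h1, hScol i q, hd]
    ring
  refine ⟨part1, part2, S, Matrix.diagonal d, hSdet, Matrix.isDiag_diagonal d, ?_⟩
  have hS1 : S * S⁻¹ = 1 := mul_nonsing_inv S hSdet
  calc Tu * Pv = (Tu * Pv) * (S * S⁻¹) := by rw [hS1, Matrix.mul_one]
    _ = ((Tu * Pv) * S) * S⁻¹ := (Matrix.mul_assoc _ _ _).symm
    _ = S * Matrix.diagonal d * S⁻¹ := by rw [hMS]
end
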